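/- arXiv:2009.06653 — 4 statements merged into one kernel-verified Lean document; each statement's English description precedes it below -/
import Mathlib

section
/- Let M > 0, 0 ≤ a < M, r_+ = M + √(M²-a²). Then A_max = (5M² - a² + 3M√(M²-a²)) / (24M(M²-a²)) is strictly increasing in a on [0, M) and tends to +∞ as a → M⁻, and A_max = 1/(3M) when a = 0. -/
/-!
In terms of `u = M / √(M² - a²) = M / (r₊ - M)` one has `5M² - a² = 4M² + (M/u)²`, so
`A_max = (4u² + 3u + 1) / (24M)`, a quadratic with positive coefficients. As `a` runs through
`[0, M)`, `u` increases strictly from `1` to `+∞`, which gives both monotonicity and divergence.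
-/

open Real Set Filter Topology

noncomputable section

variable {M : ℝ}

def extremalityRatio (M a : ℝ) : ℝ := M / √(M ^ 2 - a ^ 2)

def amaxQuadratic (M u : ℝ) : ℝ := (4 * u ^ 2 + 3 * u + 1) / (24 * M)

theorem amax_eq_amaxQuadratic_extremalityRatio (hM : M ≠ 0) {a : ℝ} (ha : a ^ 2 < M ^ 2) :
    (5 * M ^ 2 - a ^ 2 + 3 * M * √(M ^ 2 - a ^ 2)) / (24 * M * (M ^ 2 - a ^ 2)) =
      amaxQuadratic M (extremalityRatio M a) := by
  have hs : 0 < √(M ^ 2 - a ^ 2) := sqrt_pos.2 (sub_pos.2 ha)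
  have hsq : √(M ^ 2 - a ^ 2) ^ 2 = M ^ 2 - a ^ 2 := sq_sqrt (sub_pos.2 ha).le
  rw [amaxQuadratic, extremalityRatio, show 5 * M ^ 2 - a ^ 2 = 4 * M ^ 2 + (M ^ 2 - a ^ 2) by ring]
  generalize √(M ^ 2 - a ^ 2) = s at hs hsq ⊢
  rw [← hsq]
  field_simp
  ring

theorem strictMonoOn_amaxQuadratic (hM : 0 < M) : StrictMonoOn (amaxQuadratic M) (Ici 0) := by
  intro u hu v hv huv
  unfold amaxQuadratic
  gcongr

theorem tendsto_amaxQuadratic_atTop (hM : 0 < M) : Tendsto (amaxQuadratic M) atTop atTop := by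
  have hlin : Tendsto (fun u : ℝ => (24 * M)⁻¹ * u) atTop atTop :=
    tendsto_id.const_mul_atTop (by positivity)
  refine tendsto_atTop_mono' _ ?_ hlin
  filter_upwards [eventually_ge_atTop 0] with u hu
  rw [amaxQuadratic, div_eq_inv_mul]
  gcongr
  nlinarith

theorem strictMonoOn_extremalityRatio (hM : 0 < M) : StrictMonoOn (extremalityRatio M) (Ico 0 M) := by
  intro a ⟨ha₀, haM⟩ b ⟨_, hbM⟩ hab
  have hb : 0 < M ^ 2 - b ^ 2 := by nlinarith
  exact div_lt_div_of_pos_left hM (sqrt_pos.2 hb) (sqrt_lt_sqrt hb.le (by nlinarith))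

theorem extremalityRatio_nonneg (hM : 0 ≤ M) (a : ℝ) : 0 ≤ extremalityRatio M a :=
  div_nonneg hM (sqrt_nonneg _)

theorem tendsto_extremalityRatio_nhdsLT (hM : 0 < M) :
    Tendsto (extremalityRatio M) (𝓝[<] M) atTop := by
  have hgap : Tendsto (fun a => √(M ^ 2 - a ^ 2)) (𝓝[<] M) (𝓝[>] 0) := by
    refine tendsto_nhdsWithin_of_tendsto_nhds_of_eventually_within _ ?_ ?_
    · have hcont : Continuous fun a : ℝ => √(M ^ 2 - a ^ 2) := by fun_prop
      simpa using (hcont.tendsto M).mono_left nhdsWithin_le_nhds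
    · filter_upwards [Ioo_mem_nhdsLT hM] with a ⟨ha₀, haM⟩
      exact sqrt_pos.2 (by nlinarith)
  exact (tendsto_inv_nhdsGT_zero.comp hgap).const_mul_atTop hM

end

/-- `A_max(a) = (5M² - a² + 3M√(M²-a²)) / (24M(M²-a²))` is strictly increasing in `a`
on `[0, M)`, tends to `+∞` as `a → M⁻`, and equals `1/(3M)` at `a = 0`. -/
theorem Amax_monotone_divergent (M : ℝ) (hM : 0 < M) :
    let Amax : ℝ → ℝ := fun a =>
      (5 * M ^ 2 - a ^ 2 + 3 * M * Real.sqrt (M ^ 2 - a ^ 2)) / (24 * M * (M ^ 2 - a ^ 2))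
    StrictMonoOn Amax (Ico 0 M) ∧
      Tendsto Amax (nhdsWithin M (Iio M)) atTop ∧
      Amax 0 = 1 / (3 * M) := by
  intro Amax
  have hEq : EqOn (amaxQuadratic M ∘ extremalityRatio M) Amax (Ico 0 M) := fun a ⟨ha₀, haM⟩ =>
    (amax_eq_amaxQuadratic_extremalityRatio hM.ne' (by nlinarith)).symm
  refine ⟨?_, ?_, ?_⟩
  · exact ((strictMonoOn_amaxQuadratic hM).comp (strictMonoOn_extremalityRatio hM)
      fun a _ => extremalityRatio_nonneg hM.le a).congr hEq
  · exact ((tendsto_amaxQuadratic_atTop hM).comp (tendsto_extremalityRatio_nhdsLT hM)).congr'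
      (eventually_of_mem (Ico_mem_nhdsLT hM) hEq)
  · have hratio : extremalityRatio M 0 = 1 := by
      simp [extremalityRatio, sqrt_sq hM.le, hM.ne']
    rw [← hEq ⟨le_rfl, hM⟩, Function.comp_apply, hratio, amaxQuadratic]
    field_simp
    norm_num
end

section
/- Let M > 0, a² < M², b = √(M²-a²), r_± = M ± b. The function A_-(r) = -(1/(12(r-M)))·[1 + 2M(r - r_+)/((r-r_+)(r-r_-))] = -(1/(12(r-M)))·[1 + 2M/(r - r_-)] is strictly increasing for r > r_+, and A_+(r) = (1/(12(r-M)))·[1 + 2M(r + r_+)/((r-r_+)(r-r_-))] is strictly decreasing for r > r_+. -/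
open Set

set_option maxHeartbeats 800000 in
/-- On `(r₊, ∞)`, the lower bound `A₋(r) = -(1/(12(r-M)))(1 + 2M/(r - r₋))` is strictly
increasing and the upper bound `A₊(r) = (1/(12(r-M)))(1 + 2M(r + r₊)/((r-r₊)(r-r₋)))`
is strictly decreasing. -/
theorem Abounds_monotone (M a : ℝ) (hM : 0 < M) (ha : a ^ 2 < M ^ 2) :
    let b : ℝ := Real.sqrt (M ^ 2 - a ^ 2)
    let rp : ℝ := M + b
    let rm : ℝ := M - b
    let Am : ℝ → ℝ := fun r => -((1 / (12 * (r - M))) * (1 + 2 * M / (r - rm)))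
    let Ap : ℝ → ℝ := fun r =>
      (1 / (12 * (r - M))) * (1 + 2 * M * (r + rp) / ((r - rp) * (r - rm)))
    StrictMonoOn Am (Ioi rp) ∧ StrictAntiOn Ap (Ioi rp) := by
  intro b rp rm Am Ap
  have ha' : 0 < M ^ 2 - a ^ 2 := by linarith
  have hb : 0 < b := Real.sqrt_pos.mpr ha'
  have hb2 : b ^ 2 = M ^ 2 - a ^ 2 := Real.sq_sqrt ha'.le
  have hbM : b ≤ M := by nlinarith [sq_nonneg a]
  have hrp : rp = M + b := rfl
  have hrm : rm = M - b := rfl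
  have h12 : (0:ℝ) < 12 := by norm_num
  constructor
  · intro x hx y hy hxy
    simp only [Set.mem_Ioi, hrp] at hx hy
    have hx1 : 0 < x - M := by linarith
    have hy1 : 0 < y - M := by linarith
    have hx2 : 0 < x - (M - b) := by linarith
    have hy2 : 0 < y - (M - b) := by linarith
    show -((1 / (12 * (x - M))) * (1 + 2 * M / (x - rm)))
        < -((1 / (12 * (y - M))) * (1 + 2 * M / (y - rm)))
    rw [hrm, neg_lt_neg_iff]
    have ex : (1 / (12 * (x - M))) * (1 + 2 * M / (x - (M - b)))
        = (x + b + M) / (12 * (x - M) * (x - (M - b))) := by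
      field_simp; try ring
    have ey : (1 / (12 * (y - M))) * (1 + 2 * M / (y - (M - b)))
        = (y + b + M) / (12 * (y - M) * (y - (M - b))) := by
      field_simp; try ring
    rw [ex, ey, div_lt_div_iff₀ (mul_pos (mul_pos h12 hy1) hy2)
      (mul_pos (mul_pos h12 hx1) hx2)]
    have h1 : 0 < (x - M) * (y - M) * (y - x) :=
      mul_pos (mul_pos hx1 hy1) (by linarith)
    have h2 : 0 < (2 * M + b) * (y - x) * ((y - M) + (x - M) + b) :=
      mul_pos (mul_pos (by linarith) (by linarith)) (by linarith)
    have hid : (x + b + M) * (12 * (y - M) * (y - (M - b)))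
        - (y + b + M) * (12 * (x - M) * (x - (M - b)))
        = 12 * ((x - M) * (y - M) * (y - x)
            + (2 * M + b) * (y - x) * ((y - M) + (x - M) + b)) := by ring
    linarith [hid, h1, h2]
  · intro x hx y hy hxy
    simp only [Set.mem_Ioi, hrp] at hx hy
    have hx1 : 0 < x - M := by linarith
    have hy1 : 0 < y - M := by linarith
    have hx2 : 0 < x - (M - b) := by linarith
    have hy2 : 0 < y - (M - b) := by linarith
    have hx3 : 0 < x - (M + b) := by linarith
    have hy3 : 0 < y - (M + b) := by linarith
    show (1 / (12 * (y - M))) * (1 + 2 * M * (y + rp) / ((y - rp) * (y - rm)))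
        < (1 / (12 * (x - M))) * (1 + 2 * M * (x + rp) / ((x - rp) * (x - rm)))
    rw [hrm, hrp]
    have ex : (1 / (12 * (x - M))) * (1 + 2 * M * (x + (M + b)) / ((x - (M + b)) * (x - (M - b))))
        = ((x - (M + b)) * (x - (M - b)) + 2 * M * (x + (M + b)))
          / (12 * (x - M) * ((x - (M + b)) * (x - (M - b)))) := by
      field_simp; try ring
    have ey : (1 / (12 * (y - M))) * (1 + 2 * M * (y + (M + b)) / ((y - (M + b)) * (y - (M - b))))
        = ((y - (M + b)) * (y - (M - b)) + 2 * M * (y + (M + b)))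
          / (12 * (y - M) * ((y - (M + b)) * (y - (M - b)))) := by
      field_simp; try ring
    rw [ex, ey, div_lt_div_iff₀ (mul_pos (mul_pos h12 hy1) (mul_pos hy3 hy2))
      (mul_pos (mul_pos h12 hx1) (mul_pos hx3 hx2))]
    have t1 : 0 < (x - M) * (y - M) * (y - x) * ((x - M) * (y - M) + b ^ 2) :=
      mul_pos (mul_pos (mul_pos hx1 hy1) (by linarith))
        (by positivity)
    have t2 : 0 < 2 * M * (x - M) * (y - M) * ((y - M) ^ 2 - (x - M) ^ 2) := by
      have h : 0 < (y - M) ^ 2 - (x - M) ^ 2 := by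
        nlinarith [mul_pos (show (0:ℝ) < y - x by linarith)
          (show (0:ℝ) < y + x - 2 * M by linarith)]
      exact mul_pos (mul_pos (mul_pos (by linarith) hx1) hy1) h
    have t3 : 0 < (4 * M ^ 2 + 2 * M * b - b ^ 2) * (y - x)
        * ((y - M) ^ 2 + (x - M) * (y - M) + (x - M) ^ 2 - b ^ 2) := by
      have h1 : 0 < 4 * M ^ 2 + 2 * M * b - b ^ 2 := by nlinarith
      have h2 : 0 < (x - M) ^ 2 - b ^ 2 := by
        nlinarith [mul_pos (show (0:ℝ) < x - M - b by linarith)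
          (show (0:ℝ) < x - M + b by linarith)]
      have h3 : 0 < (y - M) ^ 2 + (x - M) * (y - M) + (x - M) ^ 2 - b ^ 2 := by
        nlinarith [mul_pos hx1 hy1, sq_nonneg (y - M)]
      exact mul_pos (mul_pos h1 (by linarith)) h3
    have hid : ((x - (M + b)) * (x - (M - b)) + 2 * M * (x + (M + b)))
          * (12 * (y - M) * ((y - (M + b)) * (y - (M - b))))
        - ((y - (M + b)) * (y - (M - b)) + 2 * M * (y + (M + b)))
          * (12 * (x - M) * ((x - (M + b)) * (x - (M - b))))
        = 12 * ((x - M) * (y - M) * (y - x) * ((x - M) * (y - M) + b ^ 2)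
            + 2 * M * (x - M) * (y - M) * ((y - M) ^ 2 - (x - M) ^ 2)
            + (4 * M ^ 2 + 2 * M * b - b ^ 2) * (y - x)
              * ((y - M) ^ 2 + (x - M) * (y - M) + (x - M) ^ 2 - b ^ 2)) := by ring
    linarith [hid, t1, t2, t3]
end

section
/- Let M > 0, a² < M², b = √(M²-a²), Δ(r) = (r-r_+)(r-r_-), r_± = M ± b, and let A ∈ ℝ with A ≠ 0 satisfy either (i) 0 < A and 12Ar_+ ≤ 1, or (ii) A < 0 and |A| ≤ (1/(12b))(1 + M/b) with restriction to Δ(r) ≤ 2Mb. Suppose further d₁(r) ≤ -2d₂(r), where d₁(r) = 36A²(3Δ² - 4b⁴) - 72AMr_+(r - M) - a² and d₂(r) = 36A²b²(3Δ + 4b²). Then 108A²Δ(Δ + b²) ≤ 72AMr_+(r - M) + a², and consequently d₀(r) + d₁(r) + d₂(r) ≥ -48AMr_+(r-M) - a²/3 + r² + 2Mr + 4M²(r+r_+)/(r-r_-) > 0 for r ≥ r_+ (when A > 0, using 12Ar_+ ≤ 1, this last expression is ≥ Δ + 8M² - (4/3)a² > 0). -/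

private lemma caseC_aux (M a A r b : ℝ) (hM : 0 < M) (ha : a ^ 2 < M ^ 2)
    (hb : 0 < b) (hb2 : b ^ 2 = M ^ 2 - a ^ 2)
    (hadm : (0 < A ∧ 12 * A * (M + b) ≤ 1) ∨ A < 0)
    (hd12 : 36 * A ^ 2 * (3 * ((r - (M + b)) * (r - (M - b))) ^ 2 - 4 * b ^ 4)
        - 72 * A * M * (M + b) * (r - M) - a ^ 2
      ≤ -(2 * (36 * A ^ 2 * b ^ 2 * (3 * ((r - (M + b)) * (r - (M - b))) + 4 * b ^ 2))))
    (hr : M + b ≤ r) :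
    108 * A ^ 2 * ((r - (M + b)) * (r - (M - b))) * ((r - (M + b)) * (r - (M - b)) + b ^ 2)
        ≤ 72 * A * M * (M + b) * (r - M) + a ^ 2 ∧
      -48 * A * M * (M + b) * (r - M) - a ^ 2 / 3 + r ^ 2 + 2 * M * r
          + 4 * M ^ 2 * (r + (M + b)) / (r - (M - b))
        ≤ (-144 * A ^ 2 * ((r - (M + b)) * (r - (M - b)))
              * ((r - (M + b)) * (r - (M - b)) + b ^ 2)
            + 48 * A * M * (M + b) * (r - M) + (r - (M + b)) * (r - (M - b)) + 4 * M * r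
            + 4 * M ^ 2 * (r + (M + b)) / (r - (M - b)))
          + (36 * A ^ 2 * (3 * ((r - (M + b)) * (r - (M - b))) ^ 2 - 4 * b ^ 4)
            - 72 * A * M * (M + b) * (r - M) - a ^ 2)
          + 36 * A ^ 2 * b ^ 2 * (3 * ((r - (M + b)) * (r - (M - b))) + 4 * b ^ 2) ∧
      0 < -48 * A * M * (M + b) * (r - M) - a ^ 2 / 3 + r ^ 2 + 2 * M * r
          + 4 * M ^ 2 * (r + (M + b)) / (r - (M - b)) := by
  set D : ℝ := (r - (M + b)) * (r - (M - b)) with hD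
  have hrm : 0 < r - (M - b) := by linarith
  have hDn : 0 ≤ D := mul_nonneg (by linarith) hrm.le
  have hDeq : D = r ^ 2 - 2 * M * r + a ^ 2 := by rw [hD]; nlinarith
  have key : 108 * A ^ 2 * D * (D + b ^ 2) ≤ 72 * A * M * (M + b) * (r - M) + a ^ 2 := by
    nlinarith [mul_nonneg (mul_nonneg (sq_nonneg A) (sq_nonneg b)) hDn,
      mul_nonneg (sq_nonneg A) (sq_nonneg (b ^ 2))]
  have hfrac : 0 < 4 * M ^ 2 * (r + (M + b)) / (r - (M - b)) := by
    apply div_pos _ hrm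
    have h0 : 0 < r + (M + b) := by linarith
    positivity
  refine ⟨key, by nlinarith [key], ?_⟩
  have hrM : M ≤ r := by linarith
  rcases hadm with ⟨hApos, hArp⟩ | hAneg
  · have h1 : 48 * A * M * (M + b) * (r - M) ≤ 4 * M * (r - M) := by
      have h2 : 0 ≤ M * (r - M) := mul_nonneg hM.le (by linarith)
      nlinarith
    nlinarith [hfrac, hDn, hDeq]
  · have h1 : 0 ≤ -48 * A * M * (M + b) * (r - M) := by
      have h0 : 0 ≤ (-A) * (M * (M + b) * (r - M)) := by
        apply mul_nonneg (by linarith)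
        apply mul_nonneg (mul_nonneg hM.le (by linarith)) (by linarith)
      nlinarith
    have h2 : a ^ 2 / 3 < r ^ 2 := by nlinarith
    have hr0 : 0 < r := by linarith
    have h3 : 0 < 2 * M * r := by positivity
    linarith

/-- Case C of the positivity proof: under the admissibility bounds on `A` and the condition
`d₁(r) ≤ -2d₂(r)`, one has `108A²Δ(Δ+b²) ≤ 72AMr₊(r-M) + a²`, and consequently the value of
the enthalpy quadratic at the equator, `d₀(r) + d₁(r) + d₂(r)`, is bounded below by
`-48AMr₊(r-M) - a²/3 + r² + 2Mr + 4M²(r+r₊)/(r-r₋)`, which is strictly positive for `r ≥ r₊`. -/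
theorem caseC_equator_positivity (M a A r : ℝ) (hM : 0 < M) (ha : a ^ 2 < M ^ 2)
    (hA : A ≠ 0) :
    let b : ℝ := Real.sqrt (M ^ 2 - a ^ 2)
    let rp : ℝ := M + b
    let rm : ℝ := M - b
    let Δ : ℝ := (r - rp) * (r - rm)
    let d₀ : ℝ := -144 * A ^ 2 * Δ * (Δ + b ^ 2) + 48 * A * M * rp * (r - M)
      + Δ + 4 * M * r + 4 * M ^ 2 * (r + rp) / (r - rm)
    let d₁ : ℝ := 36 * A ^ 2 * (3 * Δ ^ 2 - 4 * b ^ 4) - 72 * A * M * rp * (r - M) - a ^ 2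
    let d₂ : ℝ := 36 * A ^ 2 * b ^ 2 * (3 * Δ + 4 * b ^ 2)
    ((0 < A ∧ 12 * A * rp ≤ 1) ∨
        (A < 0 ∧ |A| ≤ (1 / (12 * b)) * (1 + M / b) ∧ Δ ≤ 2 * M * b)) →
      d₁ ≤ -(2 * d₂) → rp ≤ r →
      108 * A ^ 2 * Δ * (Δ + b ^ 2) ≤ 72 * A * M * rp * (r - M) + a ^ 2 ∧
        -48 * A * M * rp * (r - M) - a ^ 2 / 3 + r ^ 2 + 2 * M * r
            + 4 * M ^ 2 * (r + rp) / (r - rm) ≤ d₀ + d₁ + d₂ ∧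
        0 < -48 * A * M * rp * (r - M) - a ^ 2 / 3 + r ^ 2 + 2 * M * r
            + 4 * M ^ 2 * (r + rp) / (r - rm) := by
  intro b rp rm Δ d₀ d₁ d₂ hadm hd12 hr
  have hb2 : b ^ 2 = M ^ 2 - a ^ 2 := Real.sq_sqrt (by nlinarith)
  have hb : 0 < b := Real.sqrt_pos.mpr (by nlinarith)
  exact caseC_aux M a A r b hM ha hb hb2
    (hadm.imp id (fun h => h.1)) hd12 hr
end

section
/- Let M > 0, a² ≤ M², r_± = M ± √(M²-a²). For A with 0 < |A| sufficiently small (specifically AM ≪ 1 so that terms of relative order M/r can be neglected at r ~ 1/(6|A|)), the leading-order boundary where the three-velocity becomes luminal satisfies r²(1 + 3cos²θ) = 1/(6A)², i.e., in Cartesian coordinates x² + y² + 4z² = 1/(36A²): concretely, the quadratic-in-cos²θ equation c₂cos⁴θ + c₁cos²θ + c₀ = 0 with c₀ ≈ r² - 36A²r⁴, c₁ ≈ -108A²r⁴, c₂ ≈ O(A²r²·(M²-a²)) reduces, upon dropping subleading terms, exactly to 36A²r²(1 + 3cos²θ) = 1 whenever r ≫ M. -/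
/-!
On the ellipsoid `36 A² r² (1 + 3 cos² θ) = 1` the terms of order `r²` of the quartic cancel
exactly, and every surviving term carries a factor `M` or `√(M² - a²) ≤ M`, hence is `O(M r)`
as soon as `r ≥ 2M`. On the ellipsoid `12 A r ≥ 1`, which gives both `r ≥ 2M` (for `24 A M < 1`)
and `M r ≤ 12 A M r²`.
-/

open Real Set

/-- The left-hand side `c₂ c⁴ + c₁ c² + c₀` of the boundary equation at `c = cos θ`, where `w`
stands for `√(M² - a²)`, so that the horizons are `r± = M ± w`. -/
noncomputable def boundaryQuartic (M a w A r c : ℝ) : ℝ :=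
  36 * A ^ 2 * (M ^ 2 - a ^ 2) * (3 * r ^ 2 - 6 * M * r + 4 * M ^ 2 - a ^ 2) * c ^ 4
    + (a ^ 2 + 72 * A * (r - M) * M * (M + w)
        - 36 * A ^ 2 * ((3 * r ^ 2 - 6 * M * r + 2 * M ^ 2 + a ^ 2) ^ 2
          - 6 * (r - M) ^ 2 * (r ^ 2 - 2 * M * r + a ^ 2))) * c ^ 2
    + (r ^ 2 + 2 * M * r + 4 * M ^ 2 * ((r + (M + w)) / (r - (M - w)))
        - 24 * A * M * (M + w) * (r - M)
        - 36 * A ^ 2 * (r ^ 2 - 2 * M * r + a ^ 2) * (r - M) ^ 2)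

section BoundaryQuartic

variable {M a w A r c : ℝ}

theorem boundaryQuartic_eq_of_ellipsoid (h36 : 36 * A ^ 2 * r ^ 2 * (1 + 3 * c ^ 2) = 1)
    (hw : w ^ 2 = M ^ 2 - a ^ 2) :
    boundaryQuartic M a w A r c =
      4 * M ^ 2 * ((r + (M + w)) / (r - (M - w)))
        + 36 * A ^ 2 * (1 + 3 * c ^ 2) * (M * (2 * r - M) * (r ^ 2 + (r - M) ^ 2))
        + 36 * A ^ 2 * w ^ 2 * (r - M) ^ 2 * (1 + 3 * c ^ 4)
        - 36 * A ^ 2 * w ^ 4 * c ^ 2 * (1 - c ^ 2)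
        + 2 * M * r + a ^ 2 * c ^ 2
        + 24 * A * M * (M + w) * (r - M) * (3 * c ^ 2 - 1) := by
  unfold boundaryQuartic
  linear_combination (-(r ^ 2)) * h36
    - (36 * A ^ 2 * (r - M) ^ 2 * (1 + 3 * c ^ 4)
       - 36 * A ^ 2 * (w ^ 2 + (M ^ 2 - a ^ 2)) * c ^ 2 * (1 - c ^ 2)) * hw

theorem abs_boundaryQuartic_le (hM : 0 < M) (hr : 2 * M ≤ r) (hA : 0 ≤ A) (hc : c ^ 2 ≤ 1)
    (h36 : 36 * A ^ 2 * r ^ 2 * (1 + 3 * c ^ 2) = 1) (hw : w ^ 2 = M ^ 2 - a ^ 2)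
    (hw₀ : 0 ≤ w) :
    |boundaryQuartic M a w A r c| ≤ 24 * M * r := by
  have hr₀ : 0 < r := by linarith
  have hwM : w ≤ M := by nlinarith [sq_nonneg a]
  have hMr : M ^ 2 ≤ M * r / 2 := by nlinarith
  have hAr : A * r ≤ 1 / 6 := by
    have : 36 * (A * r) ^ 2 ≤ 1 := by nlinarith [mul_nonneg (sq_nonneg (A * r)) (sq_nonneg c)]
    nlinarith [mul_nonneg hA hr₀.le]
  have hq : 0 ≤ 4 * M ^ 2 * ((r + (M + w)) / (r - (M - w))) ∧
      4 * M ^ 2 * ((r + (M + w)) / (r - (M - w))) ≤ 16 * M ^ 2 := by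
    have hden : r / 2 ≤ r - (M - w) := by linarith
    have hq4 : (r + (M + w)) / (r - (M - w)) ≤ 4 := by
      rw [div_le_iff₀ (by linarith)]; linarith
    constructor
    · exact mul_nonneg (by positivity) (div_nonneg (by linarith) (by linarith))
    · nlinarith
  have h₁ : 0 ≤ 36 * A ^ 2 * (1 + 3 * c ^ 2) * (M * (2 * r - M) * (r ^ 2 + (r - M) ^ 2)) ∧
      36 * A ^ 2 * (1 + 3 * c ^ 2) * (M * (2 * r - M) * (r ^ 2 + (r - M) ^ 2)) ≤ 4 * M * r := by
    have hX : M * (2 * r - M) * (r ^ 2 + (r - M) ^ 2) ≤ 4 * M * r * r ^ 2 := by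
      nlinarith [mul_nonneg hM.le (sq_nonneg (r - M)), mul_nonneg hM.le (sq_nonneg M),
        mul_nonneg (mul_nonneg hM.le hr₀.le) (sq_nonneg (r - M))]
    have hk : 0 ≤ 36 * A ^ 2 * (1 + 3 * c ^ 2) := by positivity
    constructor
    · exact mul_nonneg hk (mul_nonneg (mul_nonneg hM.le (by linarith)) (by positivity))
    · calc _ ≤ 36 * A ^ 2 * (1 + 3 * c ^ 2) * (4 * M * r * r ^ 2) := by gcongr
        _ = 4 * M * r := by linear_combination 4 * M * r * h36
  have h₂ : 0 ≤ 36 * A ^ 2 * w ^ 2 * (r - M) ^ 2 * (1 + 3 * c ^ 4) ∧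
      36 * A ^ 2 * w ^ 2 * (r - M) ^ 2 * (1 + 3 * c ^ 4) ≤ w ^ 2 := by
    have hrM : (r - M) ^ 2 ≤ r ^ 2 := pow_le_pow_left₀ (by linarith) (by linarith) 2
    have hc4 : c ^ 4 ≤ c ^ 2 := by nlinarith [sq_nonneg c]
    refine ⟨by positivity, ?_⟩
    calc _ ≤ 36 * A ^ 2 * w ^ 2 * r ^ 2 * (1 + 3 * c ^ 2) := by gcongr
      _ = w ^ 2 := by linear_combination w ^ 2 * h36
  have h₃ : 0 ≤ 36 * A ^ 2 * w ^ 4 * c ^ 2 * (1 - c ^ 2) ∧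
      36 * A ^ 2 * w ^ 4 * c ^ 2 * (1 - c ^ 2) ≤ w ^ 2 := by
    have hw4 : w ^ 4 ≤ w ^ 2 * r ^ 2 := by nlinarith [sq_nonneg w]
    have hcc : c ^ 2 * (1 - c ^ 2) ≤ 1 + 3 * c ^ 2 := by nlinarith [sq_nonneg c]
    refine ⟨mul_nonneg (by positivity) (by linarith), ?_⟩
    calc _ = 36 * A ^ 2 * w ^ 4 * (c ^ 2 * (1 - c ^ 2)) := by ring
      _ ≤ 36 * A ^ 2 * (w ^ 2 * r ^ 2) * (1 + 3 * c ^ 2) := by gcongr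
      _ = w ^ 2 := by linear_combination w ^ 2 * h36
  have h₄ : a ^ 2 * c ^ 2 ≤ M ^ 2 := by
    nlinarith [mul_nonneg (sq_nonneg a) (sq_nonneg c), sq_nonneg w]
  have h₅ : |24 * A * M * (M + w) * (r - M) * (3 * c ^ 2 - 1)| ≤ 16 * M ^ 2 := by
    have hc' : |3 * c ^ 2 - 1| ≤ 2 := abs_le.mpr ⟨by nlinarith [sq_nonneg c], by linarith⟩
    have hpos : 0 ≤ 24 * A * M * (M + w) * (r - M) :=
      mul_nonneg (by positivity) (by linarith)
    rw [abs_mul, abs_of_nonneg hpos]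
    calc _ ≤ 24 * A * M * (M + w) * (r - M) * 2 := by gcongr
      _ ≤ 24 * A * M * (2 * M) * r * 2 := by gcongr <;> linarith
      _ = 96 * (A * r) * M ^ 2 := by ring
      _ ≤ 96 * (1 / 6) * M ^ 2 := by gcongr
      _ = 16 * M ^ 2 := by norm_num
  rw [boundaryQuartic_eq_of_ellipsoid h36 hw, abs_le]
  replace h₅ := abs_le.mp h₅
  have hwM2 : w ^ 2 ≤ M ^ 2 := pow_le_pow_left₀ hw₀ hwM 2
  have hac : 0 ≤ a ^ 2 * c ^ 2 := by positivity
  constructor <;> linarith [hq.1, hq.2, h₁.1, h₁.2, h₂.1, h₂.2, h₃.1, h₃.2, h₅.1, h₅.2]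

end BoundaryQuartic

theorem ellipsoid_one_div_mul_sqrt {A k : ℝ} (hA : A ≠ 0) (hk : 0 < k) :
    36 * A ^ 2 * (1 / (6 * A * √k)) ^ 2 * k = 1 := by
  have hsq : √k ^ 2 = k := sq_sqrt hk.le
  have hpos : 0 < √k := sqrt_pos.mpr hk
  rw [div_pow, mul_pow, mul_pow, hsq]
  field_simp
  ring

/-- The large-radius ellipsoidal limit of the validity boundary 𝓔: for fixed `θ`, the radius
`r(A) = 1/(6A√(1 + 3cos²θ))` satisfies `36A²r(A)²(1 + 3cos²θ) = 1` exactly (i.e. the ellipsoid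
equation `r²(1 + 3cos²θ) = 1/(6A)²`), and it solves the full quartic boundary equation
`c₂ cos⁴θ + c₁ cos²θ + c₀ = 0` up to an error of relative order `O(AM)` as `A → 0⁺`. -/
theorem ellipsoid_limit_of_boundary (M a θ : ℝ) (hM : 0 < M) (ha : a ^ 2 ≤ M ^ 2) :
    let rp : ℝ := M + Real.sqrt (M ^ 2 - a ^ 2)
    let rm : ℝ := M - Real.sqrt (M ^ 2 - a ^ 2)
    let Δ : ℝ → ℝ := fun r => r ^ 2 - 2 * M * r + a ^ 2
    let c₀ : ℝ → ℝ → ℝ := fun A r =>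
      r ^ 2 + 2 * M * r + 4 * M ^ 2 * ((r + rp) / (r - rm))
        - 24 * A * M * rp * (r - M) - 36 * A ^ 2 * Δ r * (r - M) ^ 2
    let c₁ : ℝ → ℝ → ℝ := fun A r =>
      a ^ 2 + 72 * A * (r - M) * M * rp
        - 36 * A ^ 2 * ((3 * r ^ 2 - 6 * M * r + 2 * M ^ 2 + a ^ 2) ^ 2
          - 6 * (r - M) ^ 2 * Δ r)
    let c₂ : ℝ → ℝ → ℝ := fun A r =>
      36 * A ^ 2 * (M ^ 2 - a ^ 2) * (3 * r ^ 2 - 6 * M * r + 4 * M ^ 2 - a ^ 2)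
    let rA : ℝ → ℝ := fun A => 1 / (6 * A * Real.sqrt (1 + 3 * Real.cos θ ^ 2))
    (∀ A : ℝ, 0 < A → 36 * A ^ 2 * rA A ^ 2 * (1 + 3 * Real.cos θ ^ 2) = 1) ∧
      ∃ C > (0 : ℝ), ∃ δ > (0 : ℝ), ∀ A ∈ Ioo (0 : ℝ) δ,
        |c₂ A (rA A) * Real.cos θ ^ 4 + c₁ A (rA A) * Real.cos θ ^ 2 + c₀ A (rA A)|
          ≤ C * A * M * rA A ^ 2 := by
  intro rp rm Δ c₀ c₁ c₂ rA
  have hk : 0 < 1 + 3 * cos θ ^ 2 := by positivity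
  have h36 : ∀ A : ℝ, 0 < A → 36 * A ^ 2 * rA A ^ 2 * (1 + 3 * cos θ ^ 2) = 1 :=
    fun A hA => ellipsoid_one_div_mul_sqrt hA.ne' hk
  refine ⟨h36, 288, by norm_num, 1 / (24 * M), by positivity, ?_⟩
  rintro A ⟨hA, hAM⟩
  have hr : 0 < rA A := by positivity
  have hAr : 1 ≤ 12 * A * rA A := by
    have : 1 ≤ (12 * A * rA A) ^ 2 := by
      nlinarith [h36 A hA, cos_sq_le_one θ, sq_nonneg (A * rA A)]
    nlinarith [mul_pos hA hr]
  have h2M : 2 * M ≤ rA A := by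
    rw [lt_div_iff₀ (by positivity)] at hAM
    nlinarith
  have hw : √(M ^ 2 - a ^ 2) ^ 2 = M ^ 2 - a ^ 2 := sq_sqrt (by linarith)
  calc _ ≤ 24 * M * rA A :=
        abs_boundaryQuartic_le hM h2M hA.le (cos_sq_le_one θ) (h36 A hA) hw (sqrt_nonneg _)
    _ ≤ 288 * A * M * rA A ^ 2 := by nlinarith [mul_pos hM hr]
end
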